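/- arXiv:1901.07674 — 4 statements merged into one kernel-verified Lean document; each statement's English description precedes it below -/
import Mathlib

section
/- Let k, n, s be positive integers, let V1, …, Vk be pairwise disjoint sets each of size n, and let F be a family of k-element sets each of which meets every Vi in exactly one vertex. If F does not contain s pairwise disjoint members, then |F| ≤ (s−1)·n^{k−1}. -/
/-- Aharoni–Howard bound for balanced `k`-partite `k`-graphs
without `s` disjoint edges. -/
theorem stmt6 {α : Type*} [DecidableEq α] (k n s : ℕ)
    (hk : 0 < k) (hn : 0 < n) (hs : 0 < s)
    (V : Fin k → Finset α)
    (hdisj : ∀ i j : Fin k, i ≠ j → Disjoint (V i) (V j))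
    (hcard : ∀ i : Fin k, (V i).card = n)
    (F : Finset (Finset α))
    (hF : ∀ f ∈ F, f.card = k ∧ ∀ i : Fin k, (f ∩ V i).card = 1)
    (hno : ¬ ∃ M ⊆ F, M.card = s ∧
        (M : Set (Finset α)).Pairwise fun e f => Disjoint e f) :
    F.card ≤ (s - 1) * n ^ (k - 1) := by
  classical
  haveI : NeZero n := ⟨hn.ne'⟩
  rcases F.eq_empty_or_nonempty with hFe | ⟨f0, hf0⟩
  · simp [hFe]
  have hα : Nonempty α := by
    obtain ⟨a, -⟩ := Finset.card_eq_one.mp ((hF f0 hf0).2 ⟨0, hk⟩)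
    exact ⟨a⟩
  inhabit α
  -- the unique vertex of `f` in part `i`
  have hvex : ∀ f : Finset α, ∀ i : Fin k, ∃ a : α, f ∈ F → f ∩ V i = {a} := by
    intro f i
    by_cases hf : f ∈ F
    · obtain ⟨a, ha⟩ := Finset.card_eq_one.mp ((hF f hf).2 i)
      exact ⟨a, fun _ => ha⟩
    · exact ⟨default, fun h => absurd h hf⟩
  choose v hv using hvex
  have hvf : ∀ f ∈ F, ∀ i, v f i ∈ f ∧ v f i ∈ V i := by
    intro f hf i
    have : v f i ∈ f ∩ V i := by rw [hv f i hf]; exact Finset.mem_singleton_self _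
    exact ⟨(Finset.mem_inter.mp this).1, (Finset.mem_inter.mp this).2⟩
  -- each edge is exactly its set of representatives
  have hrep : ∀ f ∈ F, f = Finset.image (v f) Finset.univ := by
    intro f hf
    have hsub : Finset.image (v f) Finset.univ ⊆ f := by
      intro a ha
      obtain ⟨i, -, rfl⟩ := Finset.mem_image.mp ha
      exact (hvf f hf i).1
    have hinj : Function.Injective (v f) := by
      intro i j hij
      by_contra hne
      exact (Finset.disjoint_left.mp (hdisj i j hne)) (hvf f hf i).2
        (hij ▸ (hvf f hf j).2)
    have hcardim : (Finset.image (v f) Finset.univ).card = k := by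
      rw [Finset.card_image_of_injective _ hinj, Finset.card_univ, Fintype.card_fin]
    exact ((Finset.eq_of_subset_of_card_le hsub
      (by rw [hcardim, (hF f hf).1])).symm)
  -- injections from each part into `ZMod n`
  have hinjex : ∀ i : Fin k, ∃ g : α → ZMod n, Set.InjOn g (V i) := by
    intro i
    have hc : Fintype.card (V i) = n := by rw [Fintype.card_coe, hcard i]
    let e := Fintype.equivFinOfCardEq hc
    refine ⟨fun a => if h : a ∈ V i then (((e ⟨a, h⟩ : Fin n) : ℕ) : ZMod n) else 0, ?_⟩
    intro a ha b hb hab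
    have ha' : a ∈ V i := ha
    have hb' : b ∈ V i := hb
    simp only [dif_pos ha', dif_pos hb'] at hab
    have := congrArg ZMod.val hab
    rw [ZMod.val_cast_of_lt (e ⟨a, ha'⟩).isLt, ZMod.val_cast_of_lt (e ⟨b, hb'⟩).isLt,
      Fin.val_inj] at this
    exact congrArg Subtype.val (e.injective this)
  choose ι hι using hinjex
  set i0 : Fin k := ⟨0, hk⟩ with hi0
  -- coordinates and profile
  set c : Finset α → Fin k → ZMod n := fun f i => ι i (v f i) with hc
  set p : Finset α → ({i : Fin k // i ≠ i0} → ZMod n) :=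
    fun f i => c f i - c f i0 with hp
  -- edges with equal coordinates are equal
  have hceq : ∀ f ∈ F, ∀ g ∈ F, (∀ i, c f i = c g i) → f = g := by
    intro f hf g hg h
    rw [hrep f hf, hrep g hg]
    congr 1
    funext i
    exact hι i (hvf f hf i).2 (hvf g hg i).2 (h i)
  -- fibers of the profile map are matchings
  have hfiber : ∀ f ∈ F, ∀ g ∈ F, p f = p g → f ≠ g → Disjoint f g := by
    intro f hf g hg hpfg hne
    have hd : ∀ i : Fin k, c f i - c g i = c f i0 - c g i0 := by
      intro i
      by_cases hi : i = i0
      · rw [hi]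
      · have := congrFun hpfg ⟨i, hi⟩
        simp only [hp] at this
        linear_combination this
    have hd0 : c f i0 - c g i0 ≠ 0 := by
      intro h0
      apply hne
      refine hceq f hf g hg fun i => ?_
      have := hd i
      rw [h0, sub_eq_zero] at this
      exact this
    have hvne : ∀ i, v f i ≠ v g i := by
      intro i hvi
      apply hd0
      rw [← hd i]
      simp [hc, hvi]
    rw [hrep f hf, hrep g hg]
    rw [Finset.disjoint_left]
    intro a haf hag
    obtain ⟨i, -, rfl⟩ := Finset.mem_image.mp haf
    obtain ⟨j, -, hji⟩ := Finset.mem_image.mp hag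
    have hij : j = i := by
      by_contra hne'
      exact (Finset.disjoint_left.mp (hdisj j i hne')) (hvf g hg j).2
        (hji ▸ (hvf f hf i).2)
    exact hvne i (by rw [← hji, hij])
  -- each fiber has at most s - 1 elements
  have hfibercard : ∀ q ∈ F.image p, (F.filter fun f => p f = q).card ≤ s - 1 := by
    intro q _
    by_contra hlt
    push_neg at hlt
    have hsle : s ≤ (F.filter fun f => p f = q).card := by omega
    obtain ⟨M, hMsub, hMcard⟩ := Finset.exists_subset_card_eq hsle
    refine hno ⟨M, fun x hx => (Finset.mem_filter.mp (hMsub hx)).1, hMcard, ?_⟩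
    intro e he f hf hef
    have he' := Finset.mem_filter.mp (hMsub he)
    have hf' := Finset.mem_filter.mp (hMsub hf)
    exact hfiber e he'.1 f hf'.1 (he'.2.trans hf'.2.symm) hef
  calc F.card ≤ (s - 1) * (F.image p).card :=
        Finset.card_le_mul_card_image F (s - 1) hfibercard
    _ ≤ (s - 1) * n ^ (k - 1) := by
        apply Nat.mul_le_mul_left
        calc (F.image p).card ≤ Fintype.card ({i : Fin k // i ≠ i0} → ZMod n) := by
              rw [← Finset.card_univ]; exact Finset.card_le_card (Finset.subset_univ _)
          _ = n ^ (k - 1) := by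
              rw [Fintype.card_fun, ZMod.card]
              simp [Fintype.card_subtype_compl]
end

section
/- Let G1, G2, G3 be (simple) graphs on the same vertex set V of n ≥ 4 vertices such that every edge of G1 intersects every edge of G2 and every edge of G1 intersects every edge of G3. Then for every set A ⊆ V with |A| = 3, the sum over i = 1,2,3 and over v ∈ A of deg_{G_i}(v) is at most 6(n−1). -/
set_option maxHeartbeats 1000000

section helpers

variable {n : ℕ}

lemma deg_le_of (K : SimpleGraph (Fin n)) [DecidableRel K.Adj] (v : Fin n)
    (s : Finset (Fin n)) (h : ∀ u, K.Adj v u → u ∈ s) : K.degree v ≤ s.card := by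
  rw [← SimpleGraph.card_neighborFinset_eq_degree]
  exact Finset.card_le_card fun u hu =>
    h u ((SimpleGraph.mem_neighborFinset _ _ _).mp hu)

lemma card_pair_le (a b : Fin n) : ({a, b} : Finset (Fin n)).card ≤ 2 :=
  (Finset.card_insert_le _ _).trans (by simp)

lemma sum3a {f : Fin n → ℕ} {x y z a b : Fin n} (hxy : x ≠ y) (hxz : x ≠ z) (hyz : y ≠ z)
    {M k : ℕ} (hM : ∀ v, f v ≤ M) (hk : ∀ v, v ≠ a → v ≠ b → f v ≤ k) :
    f x + f y + f z ≤ M + M + k := by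
  by_cases h1 : x = a ∨ x = b
  · by_cases h2 : y = a ∨ y = b
    · by_cases h3 : z = a ∨ z = b
      · exfalso
        rcases h1 with rfl | rfl <;> rcases h2 with h2 | h2 <;> rcases h3 with h3 | h3 <;>
          simp_all
      · push_neg at h3
        have := hk z h3.1 h3.2; have := hM x; have := hM y; omega
    · push_neg at h2
      have := hk y h2.1 h2.2; have := hM x; have := hM z; omega
  · push_neg at h1
    have := hk x h1.1 h1.2; have := hM y; have := hM z; omega

lemma sum3b {f : Fin n → ℕ} {x y z c : Fin n} (hxy : x ≠ y) (hxz : x ≠ z) (hyz : y ≠ z)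
    {M k : ℕ} (hkM : k ≤ M) (hM : ∀ v, f v ≤ M) (hk : ∀ v, v ≠ c → f v ≤ k) :
    f x + f y + f z ≤ M + k + k := by
  by_cases h1 : x = c
  · subst h1
    have := hk y (Ne.symm hxy); have := hk z (Ne.symm hxz); have := hM x; omega
  · by_cases h2 : y = c
    · subst h2
      have := hk x h1; have := hk z (Ne.symm hyz); have := hM y; omega
    · by_cases h3 : z = c
      · subst h3
        have := hk x h1; have := hk y h2; have := hM z; omega
      · have := hk x h1; have := hk y h2; have := hk z h3; omega

lemma disj_deg {K L : SimpleGraph (Fin n)} [DecidableRel L.Adj]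
    (hcr : ∀ ⦃u v w t⦄, K.Adj u v → L.Adj w t → u = w ∨ u = t ∨ v = w ∨ v = t)
    {p q r s : Fin n} (h1 : K.Adj p q) (h2 : K.Adj r s)
    (hpr : p ≠ r) (hps : p ≠ s) (hqr : q ≠ r) (hqs : q ≠ s) :
    ∀ v, L.degree v ≤ 2 := by
  intro v
  by_cases hv : v = p ∨ v = q
  · refine le_trans (deg_le_of L v {r, s} ?_) (card_pair_le r s)
    intro u hu
    rcases hcr h2 hu with h | h | h | h
    · exfalso; rcases hv with rfl | rfl
      · exact hpr h.symm
      · exact hqr h.symm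
    · simp [← h]
    · exfalso; rcases hv with rfl | rfl
      · exact hps h.symm
      · exact hqs h.symm
    · simp [← h]
  · push_neg at hv
    refine le_trans (deg_le_of L v {p, q} ?_) (card_pair_le p q)
    intro u hu
    rcases hcr h1 hu with h | h | h | h
    · exact absurd h.symm hv.1
    · simp [← h]
    · exact absurd h.symm hv.2
    · simp [← h]

lemma star_force {K L : SimpleGraph (Fin n)}
    (hcr : ∀ ⦃u v w t⦄, K.Adj u v → L.Adj w t → u = w ∨ u = t ∨ v = w ∨ v = t)
    {x i j k : Fin n} (hij : i ≠ j) (hik : i ≠ k) (hjk : j ≠ k)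
    (h1 : L.Adj x i) (h2 : L.Adj x j) (h3 : L.Adj x k) :
    ∀ u w, K.Adj u w → u = x ∨ w = x := by
  intro u w huw
  by_contra hc
  push_neg at hc
  have t1 : u = i ∨ w = i := by rcases hcr huw h1 with h | h | h | h <;> tauto
  have t2 : u = j ∨ w = j := by rcases hcr huw h2 with h | h | h | h <;> tauto
  have t3 : u = k ∨ w = k := by rcases hcr huw h3 with h | h | h | h <;> tauto
  rcases t1 with rfl | rfl <;> rcases t2 with h | h <;> rcases t3 with h' | h' <;> simp_all

lemma tri_endp {K L : SimpleGraph (Fin n)}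
    (hcr : ∀ ⦃u v w t⦄, K.Adj u v → L.Adj w t → u = w ∨ u = t ∨ v = w ∨ v = t)
    {c d y : Fin n} (hcd : L.Adj c d) (hcy : L.Adj c y) (hdy : L.Adj d y) :
    ∀ ⦃e f⦄, K.Adj e f → e = c ∨ e = d ∨ e = y := by
  intro e f hef
  by_contra he
  push_neg at he
  obtain ⟨he1, he2, he3⟩ := he
  have hcd' := hcd.ne
  have hcy' := hcy.ne
  have hdy' := hdy.ne
  have t1 : f = c ∨ f = d := by rcases hcr hef hcd with h | h | h | h <;> tauto
  have t2 : f = c ∨ f = y := by rcases hcr hef hcy with h | h | h | h <;> tauto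
  have t3 : f = d ∨ f = y := by rcases hcr hef hdy with h | h | h | h <;> tauto
  rcases t1 with rfl | rfl <;> rcases t2 with h | h <;> rcases t3 with h' | h' <;> simp_all

lemma tri_deg (K : SimpleGraph (Fin n)) [DecidableRel K.Adj] {c d y : Fin n}
    (hcd : c ≠ d) (hcy : c ≠ y) (hdy : d ≠ y)
    (hT : ∀ ⦃e f⦄, K.Adj e f → e = c ∨ e = d ∨ e = y) (v : Fin n) : K.degree v ≤ 2 := by
  by_cases hv : v = c ∨ v = d ∨ v = y
  · have hsub : ∀ u, K.Adj v u → u ∈ ({c, d, y} : Finset (Fin n)).erase v := by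
      intro u hu
      refine Finset.mem_erase.mpr ⟨hu.ne', ?_⟩
      have := hT hu.symm
      simp only [Finset.mem_insert, Finset.mem_singleton]
      tauto
    refine le_trans (deg_le_of K v _ hsub) ?_
    rw [Finset.card_erase_of_mem (by simp only [Finset.mem_insert, Finset.mem_singleton]; tauto)]
    have : ({c, d, y} : Finset (Fin n)).card = 3 := by
      rw [Finset.card_insert_of_notMem (by simp [hcd, hcy]),
        Finset.card_insert_of_notMem (by simp [hdy]), Finset.card_singleton]
    omega
  · refine le_trans (deg_le_of K v ∅ ?_) (by simp)
    intro u hu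
    exact absurd (hT hu) hv

end helpers
lemma crossL {n : ℕ} (hn : 4 ≤ n) (G H : SimpleGraph (Fin n))
    [DecidableRel G.Adj] [DecidableRel H.Adj]
    (hx : ∀ ⦃a b c d⦄, G.Adj a b → H.Adj c d → a = c ∨ a = d ∨ b = c ∨ b = d)
    (A : Finset (Fin n)) (hA : A.card = 3) :
    (∑ v ∈ A, G.degree v) + 2 * ∑ v ∈ A, H.degree v ≤ 6 * (n - 1) := by
  have hxs : ∀ ⦃c d a b⦄, H.Adj c d → G.Adj a b → c = a ∨ c = b ∨ d = a ∨ d = b := by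
    intro c d a b h1 h2
    rcases hx h2 h1 with h | h | h | h <;> tauto
  obtain ⟨x, y, z, hxy, hxz, hyz, rfl⟩ := Finset.card_eq_three.mp hA
  have hsum : ∀ f : Fin n → ℕ, ∑ v ∈ ({x, y, z} : Finset (Fin n)), f v = f x + f y + f z := by
    intro f
    rw [Finset.sum_insert (by simp [hxy, hxz]), Finset.sum_insert (by simp [hyz]),
      Finset.sum_singleton, add_assoc]
  rw [hsum, hsum]
  have hdegG : ∀ v, G.degree v ≤ n - 1 := fun v =>
    Nat.le_sub_one_of_lt (by simpa using G.degree_lt_card_verts v)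
  have hdegH : ∀ v, H.degree v ≤ n - 1 := fun v =>
    Nat.le_sub_one_of_lt (by simpa using H.degree_lt_card_verts v)
  by_cases hG : ∃ a b, G.Adj a b
  swap
  · push_neg at hG
    have hG0 : ∀ v, G.degree v ≤ 0 := fun v =>
      (deg_le_of G v ∅ (fun u hu => absurd hu (hG v u))).trans (by simp)
    have := hG0 x; have := hG0 y; have := hG0 z
    have := hdegH x; have := hdegH y; have := hdegH z
    omega
  obtain ⟨a, b, hab⟩ := hG
  by_cases hH : ∃ c d, H.Adj c d
  swap
  · push_neg at hH
    have hH0 : ∀ v, H.degree v ≤ 0 := fun v =>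
      (deg_le_of H v ∅ (fun u hu => absurd hu (hH v u))).trans (by simp)
    have := hH0 x; have := hH0 y; have := hH0 z
    have := hdegG x; have := hdegG y; have := hdegG z
    omega
  obtain ⟨c, d, hcd⟩ := hH
  -- bound for H degrees away from the G-edge {a,b}
  have hHsmall : ∀ v, v ≠ a → v ≠ b → H.degree v ≤ 2 := by
    intro v hva hvb
    refine le_trans (deg_le_of H v {a, b} ?_) (card_pair_le a b)
    intro u hu
    rcases hxs hu hab with h | h | h | h
    · exact absurd h hva
    · exact absurd h hvb
    · simp [h]
    · simp [h]
  by_cases hGd : ∃ p q r s, G.Adj p q ∧ G.Adj r s ∧ p ≠ r ∧ p ≠ s ∧ q ≠ r ∧ q ≠ s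
  · -- Case P : G has two disjoint edges
    obtain ⟨p, q, r, s, h1, h2, hpr, hps, hqr, hqs⟩ := hGd
    have dH2 : ∀ v, H.degree v ≤ 2 := disj_deg hx h1 h2 hpr hps hqr hqs
    by_cases hHd : ∃ p' q' r' s', H.Adj p' q' ∧ H.Adj r' s' ∧ p' ≠ r' ∧ p' ≠ s' ∧ q' ≠ r' ∧ q' ≠ s'
    · -- P1 : H also has two disjoint edges
      obtain ⟨p', q', r', s', h1', h2', c1, c2, c3, c4⟩ := hHd
      have dG2 : ∀ v, G.degree v ≤ 2 := disj_deg hxs h1' h2' c1 c2 c3 c4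
      have := dG2 x; have := dG2 y; have := dG2 z
      have := dH2 x; have := dH2 y; have := dH2 z
      omega
    · -- P2 : H intersecting
      push_neg at hHd
      have hHint : ∀ ⦃u v w t⦄, H.Adj u v → H.Adj w t → u = w ∨ u = t ∨ v = w ∨ v = t := by
        intro u v w t hu hw
        by_contra hcon
        push_neg at hcon
        exact hcon.2.2.2 (hHd u v w t hu hw hcon.1 hcon.2.1 hcon.2.2.1)
      have hGsmall : ∀ v, v ≠ c → v ≠ d → G.degree v ≤ 2 := by
        intro v hvc hvd
        refine le_trans (deg_le_of G v {c, d} ?_) (card_pair_le c d)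
        intro u hu
        rcases hx hu hcd with h | h | h | h
        · exact absurd h hvc
        · exact absurd h hvd
        · simp [h]
        · simp [h]
      -- helper: if all H-edges go through a vertex e, we get the bound
      have star_case : ∀ e : Fin n, (∀ u w, H.Adj u w → u = e ∨ w = e) →
          G.degree x + G.degree y + G.degree z +
            2 * (H.degree x + H.degree y + H.degree z) ≤ 6 * (n - 1) := by
        intro e he
        have hde : H.degree e ≤ 2 := by
          by_contra hlt
          push_neg at hlt
          rw [← SimpleGraph.card_neighborFinset_eq_degree] at hlt
          obtain ⟨i, j, k, hi, hj, hk, hij, hik, hjk⟩ := Finset.two_lt_card_iff.mp hlt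
          rw [SimpleGraph.mem_neighborFinset] at hi hj hk
          have hforce := star_force hx hij hik hjk hi hj hk
          rcases hforce p q h1 with rfl | rfl <;> rcases hforce r s h2 with h | h <;> simp_all
        have hH1 : ∀ v, v ≠ e → H.degree v ≤ 1 := by
          intro v hv
          refine le_trans (deg_le_of H v {e} ?_) (by simp)
          intro u hu
          rcases he v u hu with h | h
          · exact absurd h hv
          · simp [h]
        have hHM : ∀ v, H.degree v ≤ 2 := dH2
        have hSH : H.degree x + H.degree y + H.degree z ≤ 2 + 1 + 1 :=
          sum3b hxy hxz hyz (by norm_num) hHM hH1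
        have hSG : G.degree x + G.degree y + G.degree z ≤ (n - 1) + (n - 1) + 2 :=
          sum3a hxy hxz hyz hdegG hGsmall
        omega
      by_cases hc : ∀ u w, H.Adj u w → u = c ∨ w = c
      · exact star_case c hc
      · by_cases hd : ∀ u w, H.Adj u w → u = d ∨ w = d
        · exact star_case d hd
        · -- P2-R2 : triangle in H
          push_neg at hc hd
          obtain ⟨u1, w1, h_1, hu1, hw1⟩ := hc
          obtain ⟨u2, w2, h_2, hu2, hw2⟩ := hd
          have hy1 : ∃ y1, H.Adj d y1 ∧ y1 ≠ c ∧ y1 ≠ d := by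
            rcases hHint h_1 hcd with h | h | h | h
            · exact absurd h hu1
            · exact ⟨w1, h ▸ h_1, hw1, by rw [← h]; exact h_1.ne'⟩
            · exact absurd h hw1
            · exact ⟨u1, (h ▸ h_1).symm, hu1, by rw [← h]; exact h_1.ne⟩
          have hy2 : ∃ y2, H.Adj c y2 ∧ y2 ≠ c ∧ y2 ≠ d := by
            rcases hHint h_2 hcd with h | h | h | h
            · exact ⟨w2, h ▸ h_2, by rw [← h]; exact h_2.ne', hw2⟩
            · exact absurd h hu2
            · exact ⟨u2, (h ▸ h_2).symm, by rw [← h]; exact h_2.ne, hu2⟩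
            · exact absurd h hw2
          obtain ⟨y1, hdy1, hy1c, hy1d⟩ := hy1
          obtain ⟨y2, hcy2, hy2c, hy2d⟩ := hy2
          have hyy : y1 = y2 := by
            rcases hHint hdy1 hcy2 with h | h | h | h
            · exact absurd h hcd.ne'
            · exact absurd h.symm hy2d
            · exact absurd h hy1c
            · exact h
          subst hyy
          have hTG := tri_endp hx hcd hcy2 hdy1
          have dG2 : ∀ v, G.degree v ≤ 2 :=
            tri_deg G hcd.ne (Ne.symm hy2c) (Ne.symm hy2d) hTG
          have := dG2 x; have := dG2 y; have := dG2 z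
          have := dH2 x; have := dH2 y; have := dH2 z
          omega
  · -- Case Q : G intersecting
    push_neg at hGd
    have hGint : ∀ ⦃u v w t⦄, G.Adj u v → G.Adj w t → u = w ∨ u = t ∨ v = w ∨ v = t := by
      intro u v w t hu hw
      by_contra hcon
      push_neg at hcon
      exact hcon.2.2.2 (hGd u v w t hu hw hcon.1 hcon.2.1 hcon.2.2.1)
    -- helper for the star cases
    have star_case : ∀ e e' : Fin n, G.Adj e e' → (∀ u w, G.Adj u w → u = e ∨ w = e) →
        G.degree x + G.degree y + G.degree z +
          2 * (H.degree x + H.degree y + H.degree z) ≤ 6 * (n - 1) := by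
      intro e e' hee he
      have hG1 : ∀ v, v ≠ e → G.degree v ≤ 1 := by
        intro v hv
        refine le_trans (deg_le_of G v {e} ?_) (by simp)
        intro u hu
        rcases he v u hu with h | h
        · exact absurd h hv
        · simp [h]
      by_cases hbig : 2 < G.degree e
      · rw [← SimpleGraph.card_neighborFinset_eq_degree] at hbig
        obtain ⟨i, j, k, hi, hj, hk, hij, hik, hjk⟩ := Finset.two_lt_card_iff.mp hbig
        rw [SimpleGraph.mem_neighborFinset] at hi hj hk
        have hHa : ∀ u w, H.Adj u w → u = e ∨ w = e := star_force hxs hij hik hjk hi hj hk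
        have hH1 : ∀ v, v ≠ e → H.degree v ≤ 1 := by
          intro v hv
          refine le_trans (deg_le_of H v {e} ?_) (by simp)
          intro u hu
          rcases hHa v u hu with h | h
          · exact absurd h hv
          · simp [h]
        have hSG : G.degree x + G.degree y + G.degree z ≤ (n - 1) + 1 + 1 :=
          sum3b hxy hxz hyz (by omega) hdegG hG1
        have hSH : H.degree x + H.degree y + H.degree z ≤ (n - 1) + 1 + 1 :=
          sum3b hxy hxz hyz (by omega) hdegH hH1
        omega
      · push_neg at hbig
        by_cases h2n : ∃ u w, G.Adj e u ∧ G.Adj e w ∧ u ≠ w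
        · obtain ⟨b1, b2, ha1, ha2, hb12⟩ := h2n
          have hH2' : ∀ v, v ≠ e → H.degree v ≤ 2 := by
            intro v hve
            by_cases hvb1 : v = b1
            · subst hvb1
              refine le_trans (deg_le_of H v {e, b2} ?_) (card_pair_le e b2)
              intro u hu
              rcases hxs hu ha2 with h | h | h | h
              · exact absurd h hve
              · exact absurd h (fun h' => hb12 h')
              · simp [h]
              · simp [h]
            · by_cases hvb2 : v = b2
              · subst hvb2
                refine le_trans (deg_le_of H v {e, b1} ?_) (card_pair_le e b1)
                intro u hu
                rcases hxs hu ha1 with h | h | h | h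
                · exact absurd h hve
                · exact absurd h (fun h' => hb12 h'.symm)
                · simp [h]
                · simp [h]
              · refine le_trans (deg_le_of H v {e} ?_) (by simp)
                intro u hu
                have t1 : u = e ∨ u = b1 := by
                  rcases hxs hu ha1 with h | h | h | h
                  · exact absurd h hve
                  · exact absurd h hvb1
                  · exact Or.inl h
                  · exact Or.inr h
                have t2 : u = e ∨ u = b2 := by
                  rcases hxs hu ha2 with h | h | h | h
                  · exact absurd h hve
                  · exact absurd h hvb2
                  · exact Or.inl h
                  · exact Or.inr h
                rcases t1 with h | h
                · simp [h]
                · rcases t2 with h' | h'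
                  · simp [h']
                  · exact absurd (h.symm.trans h') hb12
          have hGM : ∀ v, G.degree v ≤ 2 := by
            intro v
            by_cases hv : v = e
            · exact hv ▸ hbig
            · exact (hG1 v hv).trans (by norm_num)
          have hSG : G.degree x + G.degree y + G.degree z ≤ 2 + 1 + 1 :=
            sum3b hxy hxz hyz (by norm_num) hGM hG1
          have hSH : H.degree x + H.degree y + H.degree z ≤ (n - 1) + 2 + 2 :=
            sum3b hxy hxz hyz (by omega) hdegH hH2'
          omega
        · push_neg at h2n
          have hG1' : ∀ v, G.degree v ≤ 1 := by
            intro v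
            by_cases hv : v = e
            · subst hv
              refine le_trans (deg_le_of G v {e'} ?_) (by simp)
              intro u hu
              simp [h2n u e' hu hee]
            · exact hG1 v hv
          have hG0 : ∀ v, v ≠ e → v ≠ e' → G.degree v ≤ 0 := by
            intro v hve hve'
            refine le_trans (deg_le_of G v ∅ ?_) (by simp)
            intro u hu
            exfalso
            rcases he v u hu with h | h
            · exact hve h
            · subst h
              exact hve' (h2n v e' hu.symm hee)
          have hSG : G.degree x + G.degree y + G.degree z ≤ 1 + 1 + 0 :=
            sum3a hxy hxz hyz hG1' hG0
          have hSH : H.degree x + H.degree y + H.degree z ≤ (n - 1) + (n - 1) + 2 := by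
            have hHsm : ∀ v, v ≠ e → v ≠ e' → H.degree v ≤ 2 := by
              intro v hve hve'
              refine le_trans (deg_le_of H v {e, e'} ?_) (card_pair_le e e')
              intro u hu
              rcases hxs hu hee with h | h | h | h
              · exact absurd h hve
              · exact absurd h hve'
              · simp [h]
              · simp [h]
            exact sum3a (f := fun v => H.degree v) (a := e) (b := e') (M := n - 1) (k := 2) hxy hxz hyz hdegH hHsm
          omega
    by_cases ha : ∀ u w, G.Adj u w → u = a ∨ w = a
    · exact star_case a b hab ha
    · by_cases hb : ∀ u w, G.Adj u w → u = b ∨ w = b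
      · exact star_case b a hab.symm hb
      · -- Q-R2 : triangle in G
        push_neg at ha hb
        obtain ⟨u1, w1, h_1, hu1, hw1⟩ := ha
        obtain ⟨u2, w2, h_2, hu2, hw2⟩ := hb
        have hy1 : ∃ y1, G.Adj b y1 ∧ y1 ≠ a ∧ y1 ≠ b := by
          rcases hGint h_1 hab with h | h | h | h
          · exact absurd h hu1
          · exact ⟨w1, h ▸ h_1, hw1, by rw [← h]; exact h_1.ne'⟩
          · exact absurd h hw1
          · exact ⟨u1, (h ▸ h_1).symm, hu1, by rw [← h]; exact h_1.ne⟩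
        have hy2 : ∃ y2, G.Adj a y2 ∧ y2 ≠ a ∧ y2 ≠ b := by
          rcases hGint h_2 hab with h | h | h | h
          · exact ⟨w2, h ▸ h_2, by rw [← h]; exact h_2.ne', hw2⟩
          · exact absurd h hu2
          · exact ⟨u2, (h ▸ h_2).symm, by rw [← h]; exact h_2.ne, hu2⟩
          · exact absurd h hw2
        obtain ⟨y1, hby1, hy1a, hy1b⟩ := hy1
        obtain ⟨y2, hay2, hy2a, hy2b⟩ := hy2
        have hyy : y1 = y2 := by
          rcases hGint hby1 hay2 with h | h | h | h
          · exact absurd h hab.ne'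
          · exact absurd h.symm hy2b
          · exact absurd h hy1a
          · exact h
        subst hyy
        have hTG := tri_endp hGint hab hay2 hby1
        have dG2 : ∀ v, G.degree v ≤ 2 :=
          tri_deg G hab.ne (Ne.symm hy2a) (Ne.symm hy2b) hTG
        have hTH := tri_endp hxs hab hay2 hby1
        have dH2 : ∀ v, H.degree v ≤ 2 :=
          tri_deg H hab.ne (Ne.symm hy2a) (Ne.symm hy2b) hTH
        have := dG2 x; have := dG2 y; have := dG2 z
        have := dH2 x; have := dH2 y; have := dH2 z
        omega

/-- Degree sum bound for three cross-intersecting graphs. -/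
theorem stmt7 (n : ℕ) (hn : 4 ≤ n)
    (G1 G2 G3 : SimpleGraph (Fin n))
    [DecidableRel G1.Adj] [DecidableRel G2.Adj] [DecidableRel G3.Adj]
    (h12 : ∀ e ∈ G1.edgeSet, ∀ f ∈ G2.edgeSet, ∃ v, v ∈ e ∧ v ∈ f)
    (h13 : ∀ e ∈ G1.edgeSet, ∀ f ∈ G3.edgeSet, ∃ v, v ∈ e ∧ v ∈ f)
    (A : Finset (Fin n)) (hA : A.card = 3) :
    ∑ v ∈ A, (G1.degree v + G2.degree v + G3.degree v) ≤ 6 * (n - 1) := by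
  have hx12 : ∀ ⦃a b c d⦄, G1.Adj a b → G2.Adj c d → a = c ∨ a = d ∨ b = c ∨ b = d := by
    intro a b c d h1 h2
    obtain ⟨v, hv1, hv2⟩ := h12 s(a, b) (G1.mem_edgeSet.2 h1) s(c, d) (G2.mem_edgeSet.2 h2)
    rw [Sym2.mem_iff] at hv1 hv2
    rcases hv1 with rfl | rfl <;> tauto
  have hx13 : ∀ ⦃a b c d⦄, G1.Adj a b → G3.Adj c d → a = c ∨ a = d ∨ b = c ∨ b = d := by
    intro a b c d h1 h2
    obtain ⟨v, hv1, hv2⟩ := h13 s(a, b) (G1.mem_edgeSet.2 h1) s(c, d) (G3.mem_edgeSet.2 h2)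
    rw [Sym2.mem_iff] at hv1 hv2
    rcases hv1 with rfl | rfl <;> tauto
  have L1 := crossL hn G1 G2 hx12 A hA
  have L2 := crossL hn G1 G3 hx13 A hA
  have hsplit : ∑ v ∈ A, (G1.degree v + G2.degree v + G3.degree v) =
      (∑ v ∈ A, G1.degree v) + (∑ v ∈ A, G2.degree v) + (∑ v ∈ A, G3.degree v) := by
    rw [← Finset.sum_add_distrib, ← Finset.sum_add_distrib]
  omega
end

section
/- Let G1, G2, G3 be (simple) graphs on the same vertex set V of n ≥ 5 vertices such that for all i ≠ j, every edge of G_i intersects every edge of G_j. Then for every set A ⊆ V with |A| = 3, the sum over i = 1,2,3 and over v ∈ A of deg_{G_i}(v) is at most 3(n+1). -/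
open Finset SimpleGraph

private lemma sum_split' {V : Type*} (A : Finset V) (d : V → ℕ) (p : V → Prop) [DecidablePred p]
    (M c : ℕ) (h1 : ∀ v ∈ A, p v → d v ≤ M) (h2 : ∀ v ∈ A, ¬ p v → d v ≤ c) :
    ∑ v ∈ A, d v ≤ (A.filter p).card * M + (A.filter (fun v => ¬ p v)).card * c := by
  rw [← Finset.sum_filter_add_sum_filter_not A p]
  have B1 : ∑ v ∈ A.filter p, d v ≤ (A.filter p).card * M := by
    have := Finset.sum_le_card_nsmul (A.filter p) d M
      (fun v hv => h1 v (Finset.mem_filter.1 hv).1 (Finset.mem_filter.1 hv).2)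
    simpa using this
  have B2 : ∑ v ∈ A.filter (fun v => ¬ p v), d v ≤ (A.filter (fun v => ¬ p v)).card * c := by
    have := Finset.sum_le_card_nsmul (A.filter (fun v => ¬ p v)) d c
      (fun v hv => h2 v (Finset.mem_filter.1 hv).1 (Finset.mem_filter.1 hv).2)
    simpa using this
  exact add_le_add B1 B2

private lemma sumA_one {V : Type*} [DecidableEq V] {A : Finset V} (hA : A.card = 3)
    (d : V → ℕ) (a : V) (M c : ℕ) (hcM : c ≤ M)
    (hM : ∀ v ∈ A, v = a → d v ≤ M) (hc : ∀ v ∈ A, v ≠ a → d v ≤ c) :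
    ∑ v ∈ A, d v ≤ M + 2 * c := by
  have hs := sum_split' A d (fun v => v = a) M c hM hc
  have h1 : (A.filter (fun v => v = a)).card ≤ 1 := by
    refine le_trans (Finset.card_le_card ?_) (Finset.card_singleton a).le
    intro v hv
    simp only [Finset.mem_filter] at hv
    simp [hv.2]
  have h2 : (A.filter (fun v => v = a)).card + (A.filter (fun v => ¬ v = a)).card = 3 := by
    rw [Finset.card_filter_add_card_filter_not, hA]
  set k := (A.filter (fun v => v = a)).card with hk
  have h3 : (A.filter (fun v => ¬ v = a)).card = 3 - k := by omega
  rw [h3] at hs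
  interval_cases k <;> simp at hs <;> omega

private lemma sumA_two {V : Type*} [DecidableEq V] {A : Finset V} (hA : A.card = 3)
    (d : V → ℕ) (a b : V) (M c : ℕ) (hcM : c ≤ M)
    (hM : ∀ v ∈ A, (v = a ∨ v = b) → d v ≤ M)
    (hc : ∀ v ∈ A, v ≠ a → v ≠ b → d v ≤ c) :
    ∑ v ∈ A, d v ≤ 2 * M + c := by
  have hs := sum_split' A d (fun v => v = a ∨ v = b) M c hM
    (fun v hv hnv => hc v hv (fun h => hnv (Or.inl h)) (fun h => hnv (Or.inr h)))
  have h1 : (A.filter (fun v => v = a ∨ v = b)).card ≤ 2 := by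
    refine le_trans (Finset.card_le_card (?_ : _ ⊆ ({a, b} : Finset V))) ?_
    · intro v hv
      simp only [Finset.mem_filter] at hv
      simp [hv.2]
    · exact (Finset.card_insert_le _ _).trans (by simp)
  have h2 : (A.filter (fun v => v = a ∨ v = b)).card
      + (A.filter (fun v => ¬ (v = a ∨ v = b))).card = 3 := by
    rw [Finset.card_filter_add_card_filter_not, hA]
  set k := (A.filter (fun v => v = a ∨ v = b)).card with hk
  have h3 : (A.filter (fun v => ¬ (v = a ∨ v = b))).card = 3 - k := by omega
  rw [h3] at hs
  interval_cases k <;> simp at hs <;> omega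

private lemma sumA_all {V : Type*} {A : Finset V} (hA : A.card = 3)
    (d : V → ℕ) (c : ℕ) (hc : ∀ v ∈ A, d v ≤ c) :
    ∑ v ∈ A, d v ≤ 3 * c := by
  have := Finset.sum_le_card_nsmul A d c hc
  rw [hA] at this
  simpa using this

/-- If `a` has degree ≥ 3 in `g`, then every edge of `h` (cross-intersecting with `g`)
contains `a`. -/
private lemma high_deg_mem {n : ℕ} {g h : SimpleGraph (Fin n)} [DecidableRel g.Adj]
    (hc : ∀ e ∈ g.edgeSet, ∀ f ∈ h.edgeSet, ∃ v, v ∈ e ∧ v ∈ f)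
    {a : Fin n} (ha : 3 ≤ g.degree a) : ∀ f ∈ h.edgeSet, a ∈ f := by
  intro f
  induction f using Sym2.ind with
  | _ x y =>
    intro hf
    by_contra haf
    have hax : a ≠ x := fun h => haf (by simp [h])
    have hay : a ≠ y := fun h => haf (by simp [h])
    have hsub : g.neighborFinset a ⊆ {x, y} := by
      intro u hu
      rw [SimpleGraph.mem_neighborFinset] at hu
      obtain ⟨v, hv1, hv2⟩ := hc s(a, u) (by rwa [SimpleGraph.mem_edgeSet]) s(x, y) hf
      rw [Sym2.mem_iff] at hv1 hv2
      simp only [Finset.mem_insert, Finset.mem_singleton]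
      rcases hv1 with rfl | rfl
      · rcases hv2 with h | h <;> [exact absurd h hax; exact absurd h hay]
      · exact hv2
    have : g.degree a ≤ 2 := by
      have h1 : g.degree a ≤ ({x, y} : Finset (Fin n)).card := by
        rw [← SimpleGraph.card_neighborFinset_eq_degree]
        exact Finset.card_le_card hsub
      have h2 : ({x, y} : Finset (Fin n)).card ≤ 2 :=
        (Finset.card_insert_le _ _).trans (by simp)
      omega
    omega

/-- If every edge of `h` contains `a`, then every other vertex has degree ≤ 1. -/
private lemma star_deg {n : ℕ} {h : SimpleGraph (Fin n)} [DecidableRel h.Adj] {a : Fin n}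
    (hstar : ∀ f ∈ h.edgeSet, a ∈ f) {v : Fin n} (hv : v ≠ a) : h.degree v ≤ 1 := by
  have hsub : h.neighborFinset v ⊆ {a} := by
    intro u hu
    rw [SimpleGraph.mem_neighborFinset] at hu
    have := hstar s(v, u) (by rwa [SimpleGraph.mem_edgeSet])
    rw [Sym2.mem_iff] at this
    rcases this with h1 | h1
    · exact absurd h1.symm hv
    · simp [h1]
  calc h.degree v = (h.neighborFinset v).card := by
        rw [SimpleGraph.card_neighborFinset_eq_degree]
    _ ≤ ({a} : Finset (Fin n)).card := Finset.card_le_card hsub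
    _ = 1 := Finset.card_singleton a

/-- If every edge of `g` meets `{a, x}`, then vertices outside `{a,x}` have degree ≤ 2. -/
private lemma meet_deg {n : ℕ} {g : SimpleGraph (Fin n)} [DecidableRel g.Adj] {a x : Fin n}
    (hmeet : ∀ e ∈ g.edgeSet, a ∈ e ∨ x ∈ e) {v : Fin n} (hva : v ≠ a) (hvx : v ≠ x) :
    g.degree v ≤ 2 := by
  have hsub : g.neighborFinset v ⊆ {a, x} := by
    intro u hu
    rw [SimpleGraph.mem_neighborFinset] at hu
    have := hmeet s(v, u) (by rwa [SimpleGraph.mem_edgeSet])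
    simp only [Sym2.mem_iff] at this
    simp only [Finset.mem_insert, Finset.mem_singleton]
    rcases this with (h1 | h1) | (h1 | h1)
    · exact absurd h1.symm hva
    · exact Or.inl h1.symm
    · exact absurd h1.symm hvx
    · exact Or.inr h1.symm
  calc g.degree v = (g.neighborFinset v).card := by
        rw [SimpleGraph.card_neighborFinset_eq_degree]
    _ ≤ ({a, x} : Finset (Fin n)).card := Finset.card_le_card hsub
    _ ≤ 2 := (Finset.card_insert_le _ _).trans (by simp)

/-- If every edge of `g` contains `a` or contains both `x` and `y` (with `x ≠ y`),
then every vertex other than `a` has degree ≤ 2. -/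
private lemma meet2_deg {n : ℕ} {g : SimpleGraph (Fin n)} [DecidableRel g.Adj] {a x y : Fin n}
    (hxy : x ≠ y) (hmeet : ∀ e ∈ g.edgeSet, a ∈ e ∨ (x ∈ e ∧ y ∈ e)) {v : Fin n}
    (hva : v ≠ a) : g.degree v ≤ 2 := by
  have hsub : g.neighborFinset v ⊆ {a, if v = x then y else x} := by
    intro u hu
    rw [SimpleGraph.mem_neighborFinset] at hu
    have := hmeet s(v, u) (by rwa [SimpleGraph.mem_edgeSet])
    simp only [Sym2.mem_iff] at this
    simp only [Finset.mem_insert, Finset.mem_singleton]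
    rcases this with (h1 | h1) | ⟨hx', hy'⟩
    · exact absurd h1.symm hva
    · exact Or.inl h1.symm
    · by_cases hvx : v = x
      · have : y = u := by
          rcases hy' with h | h
          · exact absurd (hvx ▸ h.symm) hxy
          · exact h
        rw [if_pos hvx]
        exact Or.inr this.symm
      · have : x = u := by
          rcases hx' with h | h
          · exact absurd h.symm hvx
          · exact h
        rw [if_neg hvx]
        exact Or.inr this.symm
  calc g.degree v = (g.neighborFinset v).card := by
        rw [SimpleGraph.card_neighborFinset_eq_degree]
    _ ≤ ({a, if v = x then y else x} : Finset (Fin n)).card := Finset.card_le_card hsub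
    _ ≤ 2 := (Finset.card_insert_le _ _).trans (by simp)

private lemma main2 {n : ℕ} (hn : 5 ≤ n) (g1 g2 g3 : SimpleGraph (Fin n))
    [DecidableRel g1.Adj] [DecidableRel g2.Adj] [DecidableRel g3.Adj]
    (c12 : ∀ e ∈ g1.edgeSet, ∀ f ∈ g2.edgeSet, ∃ v, v ∈ e ∧ v ∈ f)
    (c13 : ∀ e ∈ g1.edgeSet, ∀ f ∈ g3.edgeSet, ∃ v, v ∈ e ∧ v ∈ f)
    (c23 : ∀ e ∈ g2.edgeSet, ∀ f ∈ g3.edgeSet, ∃ v, v ∈ e ∧ v ∈ f)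
    (A : Finset (Fin n)) (hA : A.card = 3) (a : Fin n) (ha : 3 ≤ g1.degree a) :
    (∑ v ∈ A, g1.degree v) + (∑ v ∈ A, g2.degree v) + (∑ v ∈ A, g3.degree v)
      ≤ 3 * (n + 1) := by
  have c21 : ∀ e ∈ g2.edgeSet, ∀ f ∈ g1.edgeSet, ∃ v, v ∈ e ∧ v ∈ f :=
    fun e he f hf => (c12 f hf e he).imp (fun v hv => ⟨hv.2, hv.1⟩)
  have c31 : ∀ e ∈ g3.edgeSet, ∀ f ∈ g1.edgeSet, ∃ v, v ∈ e ∧ v ∈ f :=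
    fun e he f hf => (c13 f hf e he).imp (fun v hv => ⟨hv.2, hv.1⟩)
  have c32 : ∀ e ∈ g3.edgeSet, ∀ f ∈ g2.edgeSet, ∃ v, v ∈ e ∧ v ∈ f :=
    fun e he f hf => (c23 f hf e he).imp (fun v hv => ⟨hv.2, hv.1⟩)
  have hd1 : ∀ v, g1.degree v ≤ n - 1 := fun v => by
    have := g1.degree_lt_card_verts v; rw [Fintype.card_fin] at this; omega
  have hd2 : ∀ v, g2.degree v ≤ n - 1 := fun v => by
    have := g2.degree_lt_card_verts v; rw [Fintype.card_fin] at this; omega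
  have hd3 : ∀ v, g3.degree v ≤ n - 1 := fun v => by
    have := g3.degree_lt_card_verts v; rw [Fintype.card_fin] at this; omega
  -- every edge of g2 and g3 contains a
  have e2a : ∀ f ∈ g2.edgeSet, a ∈ f := high_deg_mem c12 ha
  have e3a : ∀ f ∈ g3.edgeSet, a ∈ f := high_deg_mem c13 ha
  by_cases h2a : 3 ≤ g2.degree a
  · -- all three graphs are stars at a
    have e1a : ∀ f ∈ g1.edgeSet, a ∈ f := high_deg_mem c21 h2a
    have S1 : ∑ v ∈ A, g1.degree v ≤ (n - 1) + 2 * 1 :=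
      sumA_one hA _ a (n - 1) 1 (by omega) (fun v _ _ => hd1 v)
        (fun v _ hv => star_deg e1a hv)
    have S2 : ∑ v ∈ A, g2.degree v ≤ (n - 1) + 2 * 1 :=
      sumA_one hA _ a (n - 1) 1 (by omega) (fun v _ _ => hd2 v)
        (fun v _ hv => star_deg e2a hv)
    have S3 : ∑ v ∈ A, g3.degree v ≤ (n - 1) + 2 * 1 :=
      sumA_one hA _ a (n - 1) 1 (by omega) (fun v _ _ => hd3 v)
        (fun v _ hv => star_deg e3a hv)
    omega
  by_cases h3a : 3 ≤ g3.degree a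
  · have e1a : ∀ f ∈ g1.edgeSet, a ∈ f := high_deg_mem c31 h3a
    have S1 : ∑ v ∈ A, g1.degree v ≤ (n - 1) + 2 * 1 :=
      sumA_one hA _ a (n - 1) 1 (by omega) (fun v _ _ => hd1 v)
        (fun v _ hv => star_deg e1a hv)
    have S2 : ∑ v ∈ A, g2.degree v ≤ (n - 1) + 2 * 1 :=
      sumA_one hA _ a (n - 1) 1 (by omega) (fun v _ _ => hd2 v)
        (fun v _ hv => star_deg e2a hv)
    have S3 : ∑ v ∈ A, g3.degree v ≤ (n - 1) + 2 * 1 :=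
      sumA_one hA _ a (n - 1) 1 (by omega) (fun v _ _ => hd3 v)
        (fun v _ hv => star_deg e3a hv)
    omega
  -- now deg g2 a ≤ 2 and deg g3 a ≤ 2, so all degrees in g2, g3 are small
  push_neg at h2a h3a
  have S2 : ∑ v ∈ A, g2.degree v ≤ 2 + 2 * 1 :=
    sumA_one hA _ a 2 1 (by omega) (fun v _ hv => hv ▸ (by omega))
      (fun v _ hv => star_deg e2a hv)
  have S3 : ∑ v ∈ A, g3.degree v ≤ 2 + 2 * 1 :=
    sumA_one hA _ a 2 1 (by omega) (fun v _ hv => hv ▸ (by omega))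
      (fun v _ hv => star_deg e3a hv)
  have S2z : g2.edgeSet = ∅ → ∑ v ∈ A, g2.degree v = 0 := by
    intro hE
    refine Finset.sum_eq_zero (fun v _ => ?_)
    rw [← SimpleGraph.card_neighborFinset_eq_degree, Finset.card_eq_zero]
    refine Finset.eq_empty_of_forall_notMem (fun u hu => ?_)
    rw [SimpleGraph.mem_neighborFinset] at hu
    have : s(v, u) ∈ g2.edgeSet := by rwa [SimpleGraph.mem_edgeSet]
    rw [hE] at this
    exact this
  have S3z : g3.edgeSet = ∅ → ∑ v ∈ A, g3.degree v = 0 := by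
    intro hE
    refine Finset.sum_eq_zero (fun v _ => ?_)
    rw [← SimpleGraph.card_neighborFinset_eq_degree, Finset.card_eq_zero]
    refine Finset.eq_empty_of_forall_notMem (fun u hu => ?_)
    rw [SimpleGraph.mem_neighborFinset] at hu
    have : s(v, u) ∈ g3.edgeSet := by rwa [SimpleGraph.mem_edgeSet]
    rw [hE] at this
    exact this
  by_cases h2e : g2.edgeSet.Nonempty
  · obtain ⟨f2, hf2⟩ := h2e
    have haf2 : a ∈ f2 := e2a f2 hf2
    obtain ⟨x, hax⟩ : ∃ x, s(a, x) = f2 := ⟨_, Sym2.other_spec haf2⟩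
    have hadj2 : g2.Adj a x := by rw [← SimpleGraph.mem_edgeSet, hax]; exact hf2
    have hm1 : ∀ e ∈ g1.edgeSet, a ∈ e ∨ x ∈ e := by
      intro e he
      obtain ⟨v, hv1, hv2⟩ := c12 e he s(a, x) (by rwa [SimpleGraph.mem_edgeSet])
      rw [Sym2.mem_iff] at hv2
      rcases hv2 with rfl | rfl
      · exact Or.inl hv1
      · exact Or.inr hv1
    by_cases h3e : g3.edgeSet.Nonempty
    · obtain ⟨f3, hf3⟩ := h3e
      have haf3 : a ∈ f3 := e3a f3 hf3
      obtain ⟨y, hay⟩ : ∃ y, s(a, y) = f3 := ⟨_, Sym2.other_spec haf3⟩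
      have hadj3 : g3.Adj a y := by rw [← SimpleGraph.mem_edgeSet, hay]; exact hf3
      have hm1' : ∀ e ∈ g1.edgeSet, a ∈ e ∨ y ∈ e := by
        intro e he
        obtain ⟨v, hv1, hv2⟩ := c13 e he s(a, y) (by rwa [SimpleGraph.mem_edgeSet])
        rw [Sym2.mem_iff] at hv2
        rcases hv2 with rfl | rfl
        · exact Or.inl hv1
        · exact Or.inr hv1
      by_cases hxy : x = y
      · have S1 : ∑ v ∈ A, g1.degree v ≤ 2 * (n - 1) + 2 :=
          sumA_two hA _ a x (n - 1) 2 (by omega) (fun v _ _ => hd1 v)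
            (fun v _ hva hvx => meet_deg hm1 hva hvx)
        omega
      · have hm : ∀ e ∈ g1.edgeSet, a ∈ e ∨ (x ∈ e ∧ y ∈ e) := by
          intro e he
          rcases hm1 e he with h | hx'
          · exact Or.inl h
          · rcases hm1' e he with h | hy'
            · exact Or.inl h
            · exact Or.inr ⟨hx', hy'⟩
        have S1 : ∑ v ∈ A, g1.degree v ≤ (n - 1) + 2 * 2 :=
          sumA_one hA _ a (n - 1) 2 (by omega) (fun v _ _ => hd1 v)
            (fun v _ hva => meet2_deg hxy hm hva)
        omega
    · rw [Set.not_nonempty_iff_eq_empty] at h3e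
      have S3' := S3z h3e
      have S1 : ∑ v ∈ A, g1.degree v ≤ 2 * (n - 1) + 2 :=
        sumA_two hA _ a x (n - 1) 2 (by omega) (fun v _ _ => hd1 v)
          (fun v _ hva hvx => meet_deg hm1 hva hvx)
      omega
  · rw [Set.not_nonempty_iff_eq_empty] at h2e
    have S2' := S2z h2e
    by_cases h3e : g3.edgeSet.Nonempty
    · obtain ⟨f3, hf3⟩ := h3e
      have haf3 : a ∈ f3 := e3a f3 hf3
      obtain ⟨y, hay⟩ : ∃ y, s(a, y) = f3 := ⟨_, Sym2.other_spec haf3⟩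
      have hadj3 : g3.Adj a y := by rw [← SimpleGraph.mem_edgeSet, hay]; exact hf3
      have hm1' : ∀ e ∈ g1.edgeSet, a ∈ e ∨ y ∈ e := by
        intro e he
        obtain ⟨v, hv1, hv2⟩ := c13 e he s(a, y) (by rwa [SimpleGraph.mem_edgeSet])
        rw [Sym2.mem_iff] at hv2
        rcases hv2 with rfl | rfl
        · exact Or.inl hv1
        · exact Or.inr hv1
      have S1 : ∑ v ∈ A, g1.degree v ≤ 2 * (n - 1) + 2 :=
        sumA_two hA _ a y (n - 1) 2 (by omega) (fun v _ _ => hd1 v)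
          (fun v _ hva hvy => meet_deg hm1' hva hvy)
      omega
    · rw [Set.not_nonempty_iff_eq_empty] at h3e
      have S3' := S3z h3e
      have S1 : ∑ v ∈ A, g1.degree v ≤ 3 * (n - 1) :=
        sumA_all hA _ (n - 1) (fun v _ => hd1 v)
      omega

/-- Degree sum bound for three pairwise cross-intersecting graphs. -/
theorem stmt8 (n : ℕ) (hn : 5 ≤ n)
    (G : Fin 3 → SimpleGraph (Fin n))
    [inst : ∀ i, DecidableRel (G i).Adj]
    (hcross : ∀ i j : Fin 3, i ≠ j →
      ∀ e ∈ (G i).edgeSet, ∀ f ∈ (G j).edgeSet, ∃ v, v ∈ e ∧ v ∈ f)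
    (A : Finset (Fin n)) (hA : A.card = 3) :
    ∑ i : Fin 3, ∑ v ∈ A, (G i).degree v ≤ 3 * (n + 1) := by
  rw [Fin.sum_univ_three]
  by_cases H : ∃ (i : Fin 3) (a : Fin n), 3 ≤ (G i).degree a
  · obtain ⟨i, a, hia⟩ := H
    fin_cases i
    · have := main2 hn (G 0) (G 1) (G 2) (hcross 0 1 (by decide)) (hcross 0 2 (by decide))
        (hcross 1 2 (by decide)) A hA a hia
      omega
    · have := main2 hn (G 1) (G 0) (G 2) (hcross 1 0 (by decide)) (hcross 1 2 (by decide))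
        (hcross 0 2 (by decide)) A hA a hia
      omega
    · have := main2 hn (G 2) (G 0) (G 1) (hcross 2 0 (by decide)) (hcross 2 1 (by decide))
        (hcross 0 1 (by decide)) A hA a hia
      omega
  · push_neg at H
    have b : ∀ i, ∑ v ∈ A, (G i).degree v ≤ 3 * 2 :=
      fun i => sumA_all hA _ 2 (fun v _ => by have := H i v; omega)
    have b0 := b 0
    have b1 := b 1
    have b2 := b 2
    omega
end

section
/- Let A and B be disjoint vertex sets with |A| = a ≥ 3 and |B| = b ≥ 1, let u1, u2 be two distinct vertices of A and v1 a vertex of B, and let G1, G2, G3 be (simple) graphs on the vertex set A ∪ B such that every vertex of B is isolated in G1, and every edge of G2 and every edge of G3 contains at least one vertex of A. Suppose that there do not exist two disjoint edges e and f such that either (i) e is an edge of G1 and f is an edge of G2 or of G3, or (ii) e is an edge of G2, f is an edge of G3, and at least one of e, f contains a vertex of B. Then the sum over i = 1,2,3 of (deg_{G_i}(u1) + deg_{G_i}(u2) + deg_{G_i}(v1)) is at most max{4a+7, 3a+2b+5}. -/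
set_option linter.unusedSectionVars false
set_option linter.unusedVariables false

open Finset SimpleGraph

section Helpers

variable {α : Type*} [Fintype α] [DecidableEq α]

private lemma deg_le_of_forall {G : SimpleGraph α} [DecidableRel G.Adj] {u : α} {s : Finset α}
    (h : ∀ w, G.Adj u w → w ∈ s) : G.degree u ≤ s.card := by
  rw [← SimpleGraph.card_neighborFinset_eq_degree]
  exact Finset.card_le_card fun w hw => h w ((SimpleGraph.mem_neighborFinset G u w).mp hw)

private lemma deg_le_one' {G : SimpleGraph α} [DecidableRel G.Adj] {u v : α}
    (h : ∀ w, G.Adj u w → w = v) : G.degree u ≤ 1 := by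
  have h2 := deg_le_of_forall (G := G) (u := u) (s := {v}) fun w hw => by
    simp [h w hw]
  simpa using h2

private lemma deg_le_two' {G : SimpleGraph α} [DecidableRel G.Adj] {u x y : α}
    (h : ∀ w, G.Adj u w → w = x ∨ w = y) : G.degree u ≤ 2 := by
  have h2 := deg_le_of_forall (G := G) (u := u) (s := {x, y}) fun w hw => by
    rcases h w hw with h' | h' <;> simp [h']
  refine h2.trans ?_
  refine (Finset.card_insert_le _ _).trans ?_
  simp

private lemma deg_le_one_of_star {G : SimpleGraph α} [DecidableRel G.Adj] {u v : α}
    (h : ∀ z z', G.Adj z z' → z = v ∨ z' = v) (hne : u ≠ v) : G.degree u ≤ 1 :=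
  deg_le_one' fun w hw => (h u w hw).resolve_left hne

private lemma pigeon3 (w1 w2 w3 z z' : α) (h12 : w1 ≠ w2) (h13 : w1 ≠ w3) (h23 : w2 ≠ w3)
    (k1 : w1 = z ∨ w1 = z') (k2 : w2 = z ∨ w2 = z') (k3 : w3 = z ∨ w3 = z') : False := by
  rcases k1 with h | h <;> rcases k2 with g | g <;> rcases k3 with f | f <;>
    first
      | exact h12 (h.trans g.symm)
      | exact h13 (h.trans f.symm)
      | exact h23 (g.trans f.symm)

private lemma deg_split {A B : Finset α} (hmem : ∀ w : α, w ∈ A ∨ w ∈ B)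
    {G : SimpleGraph α} [DecidableRel G.Adj] (u : α) :
    G.degree u ≤ (A.erase u).card + ((G.neighborFinset u) ∩ B).card := by
  rw [← SimpleGraph.card_neighborFinset_eq_degree]
  have hsub : G.neighborFinset u ⊆ (A.erase u) ∪ ((G.neighborFinset u) ∩ B) := by
    intro w hw
    rcases hmem w with h | h
    · exact Finset.mem_union_left _
        (Finset.mem_erase.mpr ⟨((SimpleGraph.mem_neighborFinset G u w).mp hw).ne', h⟩)
    · exact Finset.mem_union_right _ (Finset.mem_inter.mpr ⟨hw, h⟩)
  exact (Finset.card_le_card hsub).trans (Finset.card_union_le _ _)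

private lemma beta_dichotomy {A B : Finset α} (hmem : ∀ w : α, w ∈ A ∨ w ∈ B)
    {G : SimpleGraph α} [DecidableRel G.Adj] {u : α} (hu : u ∈ A) {a : ℕ} (ha : A.card = a) :
    G.degree u ≤ a ∨ ∃ w w', G.Adj u w ∧ G.Adj u w' ∧ w ∈ B ∧ w' ∈ B ∧ w ≠ w' := by
  by_cases h : 1 < ((G.neighborFinset u) ∩ B).card
  · obtain ⟨w, w', hw, hw', hne⟩ := Finset.one_lt_card_iff.mp h
    rw [Finset.mem_inter, SimpleGraph.mem_neighborFinset] at hw hw'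
    exact Or.inr ⟨w, w', hw.1, hw'.1, hw.2, hw'.2, hne⟩
  · left
    have h1 := deg_split hmem (G := G) (A := A) (B := B) u
    have h2 : (A.erase u).card = a - 1 := by rw [Finset.card_erase_of_mem hu, ha]
    have h3 : 0 < A.card := Finset.card_pos.mpr ⟨u, hu⟩
    omega

private lemma starLemma {A B : Finset α}
    (hdisj : ∀ x, x ∈ A → x ∈ B → False)
    {P Q : SimpleGraph α}
    (hQA : ∀ v w, Q.Adj v w → v ∈ A ∨ w ∈ A)
    (cross : ∀ x y z w, P.Adj x y → Q.Adj z w → (x ∈ B ∨ y ∈ B ∨ z ∈ B ∨ w ∈ B) →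
      x = z ∨ x = w ∨ y = z ∨ y = w)
    {v w w' : α} (h : P.Adj v w) (h' : P.Adj v w') (hwB : w ∈ B) (hw'B : w' ∈ B)
    (hne : w ≠ w') :
    ∀ z z', Q.Adj z z' → z = v ∨ z' = v := by
  intro z z' hzz
  by_contra hc
  push_neg at hc
  have k1' : w = z ∨ w = z' := by
    rcases cross v w z z' h hzz (Or.inr (Or.inl hwB)) with h1 | h1 | h1 | h1
    exacts [absurd h1.symm hc.1, absurd h1.symm hc.2, Or.inl h1, Or.inr h1]
  have k2' : w' = z ∨ w' = z' := by
    rcases cross v w' z z' h' hzz (Or.inr (Or.inl hw'B)) with h1 | h1 | h1 | h1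
    exacts [absurd h1.symm hc.1, absurd h1.symm hc.2, Or.inl h1, Or.inr h1]
  rcases k1' with h1 | h1 <;> rcases k2' with h2 | h2
  · exact hne (h1.trans h2.symm)
  · rcases hQA z z' hzz with hA | hA
    · exact hdisj z hA (h1 ▸ hwB)
    · exact hdisj z' hA (h2 ▸ hw'B)
  · rcases hQA z z' hzz with hA | hA
    · exact hdisj z hA (h2 ▸ hw'B)
    · exact hdisj z' hA (h1 ▸ hwB)
  · exact hne (h1.trans h2.symm)

private lemma cross_swap {B : Finset α} {P Q : SimpleGraph α}
    (cross : ∀ x y z w, P.Adj x y → Q.Adj z w → (x ∈ B ∨ y ∈ B ∨ z ∈ B ∨ w ∈ B) →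
      x = z ∨ x = w ∨ y = z ∨ y = w) :
    ∀ x y z w, Q.Adj x y → P.Adj z w → (x ∈ B ∨ y ∈ B ∨ z ∈ B ∨ w ∈ B) →
      x = z ∨ x = w ∨ y = z ∨ y = w := by
  intro x y z w h1 h2 h3
  rcases cross z w x y h2 h1 (by tauto) with h | h | h | h
  · exact Or.inl h.symm
  · exact Or.inr (Or.inr (Or.inl h.symm))
  · exact Or.inr (Or.inl h.symm)
  · exact Or.inr (Or.inr (Or.inr h.symm))

private lemma hcard_univ {A B : Finset α}
    (hdisj : ∀ x, x ∈ A → x ∈ B → False) (hmem : ∀ w : α, w ∈ A ∨ w ∈ B)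
    {a b : ℕ} (ha : A.card = a) (hb : B.card = b) : Fintype.card α = a + b := by
  have hUAB : A ∪ B = Finset.univ :=
    Finset.eq_univ_iff_forall.mpr fun x => Finset.mem_union.mpr (hmem x)
  rw [← Finset.card_univ, ← hUAB,
    Finset.card_union_of_disjoint (Finset.disjoint_left.mpr fun {x} hx hx' => hdisj x hx hx'),
    ha, hb]

private lemma lemE {A B : Finset α}
    (hdisj : ∀ x, x ∈ A → x ∈ B → False) (hmem : ∀ w : α, w ∈ A ∨ w ∈ B)
    {a b : ℕ} (ha : A.card = a) (hb : B.card = b) (hb1 : 1 ≤ b)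
    {P Q : SimpleGraph α} [DecidableRel P.Adj] [DecidableRel Q.Adj]
    (hPA : ∀ v w, P.Adj v w → v ∈ A ∨ w ∈ A)
    (hQA : ∀ v w, Q.Adj v w → v ∈ A ∨ w ∈ A)
    (cross : ∀ x y z w, P.Adj x y → Q.Adj z w → (x ∈ B ∨ y ∈ B ∨ z ∈ B ∨ w ∈ B) →
      x = z ∨ x = w ∨ y = z ∨ y = w)
    {u u' : α} (hu : u ∈ A) (hu' : u' ∈ A) (huu : u ≠ u') :
    P.degree u + P.degree u' + Q.degree u + Q.degree u' ≤ max (4 * a) (3 * a + 2 * b - 1) := by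
  have hcard : Fintype.card α = a + b := hcard_univ hdisj hmem ha hb
  have LPu : P.degree u < a + b := by have := P.degree_lt_card_verts u; omega
  have LPu' : P.degree u' < a + b := by have := P.degree_lt_card_verts u'; omega
  have LQu : Q.degree u < a + b := by have := Q.degree_lt_card_verts u; omega
  have LQu' : Q.degree u' < a + b := by have := Q.degree_lt_card_verts u'; omega
  have cross' := cross_swap cross
  have DPu : P.degree u ≤ a ∨ Q.degree u' ≤ 1 := by
    rcases beta_dichotomy hmem hu ha (G := P) with h | ⟨w, w', h1, h2, h3, h4, h5⟩
    · exact Or.inl h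
    · exact Or.inr (deg_le_one_of_star (starLemma hdisj hQA cross h1 h2 h3 h4 h5) (Ne.symm huu))
  have DPu' : P.degree u' ≤ a ∨ Q.degree u ≤ 1 := by
    rcases beta_dichotomy hmem hu' ha (G := P) with h | ⟨w, w', h1, h2, h3, h4, h5⟩
    · exact Or.inl h
    · exact Or.inr (deg_le_one_of_star (starLemma hdisj hQA cross h1 h2 h3 h4 h5) huu)
  have DQu : Q.degree u ≤ a ∨ P.degree u' ≤ 1 := by
    rcases beta_dichotomy hmem hu ha (G := Q) with h | ⟨w, w', h1, h2, h3, h4, h5⟩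
    · exact Or.inl h
    · exact Or.inr (deg_le_one_of_star (starLemma hdisj hPA cross' h1 h2 h3 h4 h5) (Ne.symm huu))
  have DQu' : Q.degree u' ≤ a ∨ P.degree u ≤ 1 := by
    rcases beta_dichotomy hmem hu' ha (G := Q) with h | ⟨w, w', h1, h2, h3, h4, h5⟩
    · exact Or.inl h
    · exact Or.inr (deg_le_one_of_star (starLemma hdisj hPA cross' h1 h2 h3 h4 h5) huu)
  have ha1 : 0 < A.card := Finset.card_pos.mpr ⟨u, hu⟩
  have hm1 : 4 * a ≤ max (4 * a) (3 * a + 2 * b - 1) := le_max_left _ _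
  have hm2 : 3 * a + 2 * b - 1 ≤ max (4 * a) (3 * a + 2 * b - 1) := le_max_right _ _
  rcases DPu with h1 | h1 <;> rcases DPu' with h2 | h2 <;> rcases DQu with h3 | h3 <;>
    rcases DQu' with h4 | h4 <;> omega

private lemma lemBII {A B : Finset α}
    (hdisj : ∀ x, x ∈ A → x ∈ B → False) (hmem : ∀ w : α, w ∈ A ∨ w ∈ B)
    {a b : ℕ} (ha : A.card = a) (hb : B.card = b) (hb1 : 1 ≤ b)
    {G1 P Q : SimpleGraph α} [DecidableRel G1.Adj] [DecidableRel P.Adj] [DecidableRel Q.Adj]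
    (h1A : ∀ x y, G1.Adj x y → x ∈ A ∧ y ∈ A)
    (cross1P : ∀ x y z w, G1.Adj x y → P.Adj z w → x = z ∨ x = w ∨ y = z ∨ y = w)
    (cross1Q : ∀ x y z w, G1.Adj x y → Q.Adj z w → x = z ∨ x = w ∨ y = z ∨ y = w)
    (cross : ∀ x y z w, P.Adj x y → Q.Adj z w → (x ∈ B ∨ y ∈ B ∨ z ∈ B ∨ w ∈ B) →
      x = z ∨ x = w ∨ y = z ∨ y = w)
    (hPA : ∀ v w, P.Adj v w → v ∈ A ∨ w ∈ A)
    (hQA : ∀ v w, Q.Adj v w → v ∈ A ∨ w ∈ A)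
    {u u' y : α} (hu : u ∈ A) (hu' : u' ∈ A) (huu : u ≠ u')
    (hy : G1.Adj u y) (hyu' : y ≠ u') :
    G1.degree u + G1.degree u' + P.degree u + P.degree u' + Q.degree u + Q.degree u' ≤
      max (4 * a + 2) (3 * a + 2 * b + 1) := by
  have hcard : Fintype.card α = a + b := hcard_univ hdisj hmem ha hb
  have LPu : P.degree u < a + b := by have := P.degree_lt_card_verts u; omega
  have LQu : Q.degree u < a + b := by have := Q.degree_lt_card_verts u; omega
  have cross' := cross_swap cross
  have d1u : G1.degree u ≤ a - 1 := by
    have h := deg_le_of_forall (G := G1) (u := u) (s := A.erase u) fun w hw =>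
      Finset.mem_erase.mpr ⟨hw.ne', (h1A u w hw).2⟩
    rwa [Finset.card_erase_of_mem hu, ha] at h
  have d1u' : G1.degree u' ≤ a - 1 := by
    have h := deg_le_of_forall (G := G1) (u := u') (s := A.erase u') fun w hw =>
      Finset.mem_erase.mpr ⟨hw.ne', (h1A u' w hw).2⟩
    rwa [Finset.card_erase_of_mem hu', ha] at h
  have dPu' : P.degree u' ≤ 2 := by
    refine deg_le_two' (x := u) (y := y) fun w hw => ?_
    rcases cross1P u y u' w hy hw with h | h | h | h
    exacts [absurd h huu, Or.inl h.symm, absurd h hyu', Or.inr h.symm]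
  have dQu' : Q.degree u' ≤ 2 := by
    refine deg_le_two' (x := u) (y := y) fun w hw => ?_
    rcases cross1Q u y u' w hy hw with h | h | h | h
    exacts [absurd h huu, Or.inl h.symm, absurd h hyu', Or.inr h.symm]
  have g1P : ∀ v w, P.Adj v w → w ∈ B → ∀ x y', G1.Adj x y' → x = v ∨ y' = v := by
    intro v w hvw hwB x y' hxy
    obtain ⟨hxA, hyA⟩ := h1A x y' hxy
    rcases cross1P x y' v w hxy hvw with h | h | h | h
    · exact Or.inl h
    · exact absurd (h ▸ hxA) fun hh => hdisj w hh hwB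
    · exact Or.inr h
    · exact absurd (h ▸ hyA) fun hh => hdisj w hh hwB
  have g1Q : ∀ v w, Q.Adj v w → w ∈ B → ∀ x y', G1.Adj x y' → x = v ∨ y' = v := by
    intro v w hvw hwB x y' hxy
    obtain ⟨hxA, hyA⟩ := h1A x y' hxy
    rcases cross1Q x y' v w hxy hvw with h | h | h | h
    · exact Or.inl h
    · exact absurd (h ▸ hxA) fun hh => hdisj w hh hwB
    · exact Or.inr h
    · exact absurd (h ▸ hyA) fun hh => hdisj w hh hwB
  have DPu : P.degree u ≤ a ∨ (Q.degree u' ≤ 1 ∧ G1.degree u' ≤ 1) := by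
    rcases beta_dichotomy hmem hu ha (G := P) with h | ⟨w, w', h1, h2, h3, h4, h5⟩
    · exact Or.inl h
    · exact Or.inr ⟨deg_le_one_of_star (starLemma hdisj hQA cross h1 h2 h3 h4 h5) (Ne.symm huu),
        deg_le_one_of_star (g1P u w h1 h3) (Ne.symm huu)⟩
  have DQu : Q.degree u ≤ a ∨ (P.degree u' ≤ 1 ∧ G1.degree u' ≤ 1) := by
    rcases beta_dichotomy hmem hu ha (G := Q) with h | ⟨w, w', h1, h2, h3, h4, h5⟩
    · exact Or.inl h
    · exact Or.inr ⟨deg_le_one_of_star (starLemma hdisj hPA cross' h1 h2 h3 h4 h5) (Ne.symm huu),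
        deg_le_one_of_star (g1Q u w h1 h3) (Ne.symm huu)⟩
  have ha1 : 0 < A.card := Finset.card_pos.mpr ⟨u, hu⟩
  have hm1 : 4 * a + 2 ≤ max (4 * a + 2) (3 * a + 2 * b + 1) := le_max_left _ _
  have hm2 : 3 * a + 2 * b + 1 ≤ max (4 * a + 2) (3 * a + 2 * b + 1) := le_max_right _ _
  rcases DPu with h1 | ⟨h1, h1'⟩ <;> rcases DQu with h2 | ⟨h2, h2'⟩ <;> omega

end Helpers

/-- Lemma 9 of the paper. -/
theorem stmt11 {α : Type*} [Fintype α] [DecidableEq α]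
    (A B : Finset α) (hAB : Disjoint A B) (hunion : A ∪ B = Finset.univ)
    (a b : ℕ) (haA : A.card = a) (hbB : B.card = b) (ha : 3 ≤ a) (hb : 1 ≤ b)
    (u1 u2 : α) (hu1 : u1 ∈ A) (hu2 : u2 ∈ A) (hu12 : u1 ≠ u2)
    (v1 : α) (hv1 : v1 ∈ B)
    (G1 G2 G3 : SimpleGraph α)
    [DecidableRel G1.Adj] [DecidableRel G2.Adj] [DecidableRel G3.Adj]
    (hB1 : ∀ v ∈ B, ∀ w : α, ¬ G1.Adj v w)
    (hA2 : ∀ v w : α, G2.Adj v w → v ∈ A ∨ w ∈ A)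
    (hA3 : ∀ v w : α, G3.Adj v w → v ∈ A ∨ w ∈ A)
    (hno1 : ¬ ∃ x y z w : α, G1.Adj x y ∧ (G2.Adj z w ∨ G3.Adj z w) ∧
      x ≠ z ∧ x ≠ w ∧ y ≠ z ∧ y ≠ w)
    (hno2 : ¬ ∃ x y z w : α, G2.Adj x y ∧ G3.Adj z w ∧
      x ≠ z ∧ x ≠ w ∧ y ≠ z ∧ y ≠ w ∧ (x ∈ B ∨ y ∈ B ∨ z ∈ B ∨ w ∈ B)) :
    (G1.degree u1 + G1.degree u2 + G1.degree v1) +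
      (G2.degree u1 + G2.degree u2 + G2.degree v1) +
      (G3.degree u1 + G3.degree u2 + G3.degree v1)
      ≤ max (4 * a + 7) (3 * a + 2 * b + 5) := by
  have hdisj : ∀ x, x ∈ A → x ∈ B → False := fun x hx hx' => Finset.disjoint_left.mp hAB hx hx'
  have hmem : ∀ w : α, w ∈ A ∨ w ∈ B := by
    intro w
    have h : w ∈ A ∪ B := by rw [hunion]; exact Finset.mem_univ w
    exact Finset.mem_union.mp h
  have hcardU : Fintype.card α = a + b := hcard_univ hdisj hmem haA hbB
  have hv1A : v1 ∉ A := fun h => hdisj v1 h hv1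
  have hu1v1 : u1 ≠ v1 := fun e => hv1A (e ▸ hu1)
  have hu2v1 : u2 ≠ v1 := fun e => hv1A (e ▸ hu2)
  have cross1 : ∀ x y z w : α, G1.Adj x y → (G2.Adj z w ∨ G3.Adj z w) →
      x = z ∨ x = w ∨ y = z ∨ y = w := by
    intro x y z w h1 h2
    by_contra hc
    push_neg at hc
    exact hno1 ⟨x, y, z, w, h1, h2, hc.1, hc.2.1, hc.2.2.1, hc.2.2.2⟩
  have cross2 : ∀ x y z w : α, G2.Adj x y → G3.Adj z w →
      (x ∈ B ∨ y ∈ B ∨ z ∈ B ∨ w ∈ B) → x = z ∨ x = w ∨ y = z ∨ y = w := by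
    intro x y z w h1 h2 h3
    by_contra hc
    push_neg at hc
    exact hno2 ⟨x, y, z, w, h1, h2, hc.1, hc.2.1, hc.2.2.1, hc.2.2.2, h3⟩
  have h1A : ∀ x y, G1.Adj x y → x ∈ A ∧ y ∈ A := by
    intro x y h
    rcases hmem x with hx | hx
    · rcases hmem y with hy | hy
      · exact ⟨hx, hy⟩
      · exact absurd h.symm (hB1 y hy x)
    · exact absurd h (hB1 x hx y)
  have e1v1 : G1.degree v1 ≤ 0 := by
    have h := deg_le_of_forall (G := G1) (u := v1) (s := (∅ : Finset α)) fun w hw =>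
      absurd hw (hB1 v1 hv1 w)
    simpa using h
  have e1u1 : G1.degree u1 ≤ a - 1 := by
    have h := deg_le_of_forall (G := G1) (u := u1) (s := A.erase u1) fun w hw =>
      Finset.mem_erase.mpr ⟨hw.ne', (h1A u1 w hw).2⟩
    rwa [Finset.card_erase_of_mem hu1, haA] at h
  have e1u2 : G1.degree u2 ≤ a - 1 := by
    have h := deg_le_of_forall (G := G1) (u := u2) (s := A.erase u2) fun w hw =>
      Finset.mem_erase.mpr ⟨hw.ne', (h1A u2 w hw).2⟩
    rwa [Finset.card_erase_of_mem hu2, haA] at h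
  have e2v1 : G2.degree v1 ≤ a := by
    have h := deg_le_of_forall (G := G2) (u := v1) (s := A) fun w hw =>
      (hA2 v1 w hw).resolve_left hv1A
    rwa [haA] at h
  have e3v1 : G3.degree v1 ≤ a := by
    have h := deg_le_of_forall (G := G3) (u := v1) (s := A) fun w hw =>
      (hA3 v1 w hw).resolve_left hv1A
    rwa [haA] at h
  have L2u1 : G2.degree u1 < a + b := by have := G2.degree_lt_card_verts u1; omega
  have L2u2 : G2.degree u2 < a + b := by have := G2.degree_lt_card_verts u2; omega
  have L3u1 : G3.degree u1 < a + b := by have := G3.degree_lt_card_verts u1; omega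
  have L3u2 : G3.degree u2 < a + b := by have := G3.degree_lt_card_verts u2; omega
  have hm1 : 4 * a + 7 ≤ max (4 * a + 7) (3 * a + 2 * b + 5) := le_max_left _ _
  have hm2 : 3 * a + 2 * b + 5 ≤ max (4 * a + 7) (3 * a + 2 * b + 5) := le_max_right _ _
  by_cases h2big : 2 < G2.degree v1
  · -- Case A : v1 has at least 3 neighbours in G2
    rw [← SimpleGraph.card_neighborFinset_eq_degree] at h2big
    obtain ⟨w1, w2, w3, hw1, hw2, hw3, h12, h13, h23⟩ := Finset.two_lt_card_iff.mp h2big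
    rw [SimpleGraph.mem_neighborFinset] at hw1 hw2 hw3
    have hG1 : ∀ x y, ¬ G1.Adj x y := by
      intro x y h
      obtain ⟨hxA, hyA⟩ := h1A x y h
      have hxv : x ≠ v1 := fun e => hv1A (e ▸ hxA)
      have hyv : y ≠ v1 := fun e => hv1A (e ▸ hyA)
      refine pigeon3 w1 w2 w3 x y h12 h13 h23 ?_ ?_ ?_
      · rcases cross1 x y v1 w1 h (Or.inl hw1) with h' | h' | h' | h'
        exacts [absurd h' hxv, Or.inl h'.symm, absurd h' hyv, Or.inr h'.symm]
      · rcases cross1 x y v1 w2 h (Or.inl hw2) with h' | h' | h' | h'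
        exacts [absurd h' hxv, Or.inl h'.symm, absurd h' hyv, Or.inr h'.symm]
      · rcases cross1 x y v1 w3 h (Or.inl hw3) with h' | h' | h' | h'
        exacts [absurd h' hxv, Or.inl h'.symm, absurd h' hyv, Or.inr h'.symm]
    have d1u1 : G1.degree u1 ≤ 0 := by
      have h := deg_le_of_forall (G := G1) (u := u1) (s := (∅ : Finset α)) fun w hw =>
        absurd hw (hG1 u1 w)
      simpa using h
    have d1u2 : G1.degree u2 ≤ 0 := by
      have h := deg_le_of_forall (G := G1) (u := u2) (s := (∅ : Finset α)) fun w hw =>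
        absurd hw (hG1 u2 w)
      simpa using h
    have star3 : ∀ z z', G3.Adj z z' → z = v1 ∨ z' = v1 := by
      intro z z' hz
      by_contra hc
      push_neg at hc
      refine pigeon3 w1 w2 w3 z z' h12 h13 h23 ?_ ?_ ?_
      · rcases cross2 v1 w1 z z' hw1 hz (Or.inl hv1) with h' | h' | h' | h'
        exacts [absurd h'.symm hc.1, absurd h'.symm hc.2, Or.inl h', Or.inr h']
      · rcases cross2 v1 w2 z z' hw2 hz (Or.inl hv1) with h' | h' | h' | h'
        exacts [absurd h'.symm hc.1, absurd h'.symm hc.2, Or.inl h', Or.inr h']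
      · rcases cross2 v1 w3 z z' hw3 hz (Or.inl hv1) with h' | h' | h' | h'
        exacts [absurd h'.symm hc.1, absurd h'.symm hc.2, Or.inl h', Or.inr h']
    have b3u1 := deg_le_one_of_star star3 hu1v1
    have b3u2 := deg_le_one_of_star star3 hu2v1
    by_cases h3big : 2 < G3.degree v1
    · rw [← SimpleGraph.card_neighborFinset_eq_degree] at h3big
      obtain ⟨x1, x2, x3, hx1, hx2, hx3, g12, g13, g23⟩ := Finset.two_lt_card_iff.mp h3big
      rw [SimpleGraph.mem_neighborFinset] at hx1 hx2 hx3
      have star2 : ∀ z z', G2.Adj z z' → z = v1 ∨ z' = v1 := by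
        intro z z' hz
        by_contra hc
        push_neg at hc
        refine pigeon3 x1 x2 x3 z z' g12 g13 g23 ?_ ?_ ?_
        · rcases cross2 z z' v1 x1 hz hx1 (Or.inr (Or.inr (Or.inl hv1))) with h' | h' | h' | h'
          exacts [absurd h' hc.1, Or.inl h'.symm, absurd h' hc.2, Or.inr h'.symm]
        · rcases cross2 z z' v1 x2 hz hx2 (Or.inr (Or.inr (Or.inl hv1))) with h' | h' | h' | h'
          exacts [absurd h' hc.1, Or.inl h'.symm, absurd h' hc.2, Or.inr h'.symm]
        · rcases cross2 z z' v1 x3 hz hx3 (Or.inr (Or.inr (Or.inl hv1))) with h' | h' | h' | h'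
          exacts [absurd h' hc.1, Or.inl h'.symm, absurd h' hc.2, Or.inr h'.symm]
      have b2u1 := deg_le_one_of_star star2 hu1v1
      have b2u2 := deg_le_one_of_star star2 hu2v1
      omega
    · omega
  · by_cases h3big : 2 < G3.degree v1
    · -- Case A' : degree of v1 in G2 ≤ 2 but at least 3 in G3
      rw [← SimpleGraph.card_neighborFinset_eq_degree] at h3big
      obtain ⟨x1, x2, x3, hx1, hx2, hx3, g12, g13, g23⟩ := Finset.two_lt_card_iff.mp h3big
      rw [SimpleGraph.mem_neighborFinset] at hx1 hx2 hx3
      have hG1 : ∀ x y, ¬ G1.Adj x y := by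
        intro x y h
        obtain ⟨hxA, hyA⟩ := h1A x y h
        have hxv : x ≠ v1 := fun e => hv1A (e ▸ hxA)
        have hyv : y ≠ v1 := fun e => hv1A (e ▸ hyA)
        refine pigeon3 x1 x2 x3 x y g12 g13 g23 ?_ ?_ ?_
        · rcases cross1 x y v1 x1 h (Or.inr hx1) with h' | h' | h' | h'
          exacts [absurd h' hxv, Or.inl h'.symm, absurd h' hyv, Or.inr h'.symm]
        · rcases cross1 x y v1 x2 h (Or.inr hx2) with h' | h' | h' | h'
          exacts [absurd h' hxv, Or.inl h'.symm, absurd h' hyv, Or.inr h'.symm]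
        · rcases cross1 x y v1 x3 h (Or.inr hx3) with h' | h' | h' | h'
          exacts [absurd h' hxv, Or.inl h'.symm, absurd h' hyv, Or.inr h'.symm]
      have d1u1 : G1.degree u1 ≤ 0 := by
        have h := deg_le_of_forall (G := G1) (u := u1) (s := (∅ : Finset α)) fun w hw =>
          absurd hw (hG1 u1 w)
        simpa using h
      have d1u2 : G1.degree u2 ≤ 0 := by
        have h := deg_le_of_forall (G := G1) (u := u2) (s := (∅ : Finset α)) fun w hw =>
          absurd hw (hG1 u2 w)
        simpa using h
      have star2 : ∀ z z', G2.Adj z z' → z = v1 ∨ z' = v1 := by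
        intro z z' hz
        by_contra hc
        push_neg at hc
        refine pigeon3 x1 x2 x3 z z' g12 g13 g23 ?_ ?_ ?_
        · rcases cross2 z z' v1 x1 hz hx1 (Or.inr (Or.inr (Or.inl hv1))) with h' | h' | h' | h'
          exacts [absurd h' hc.1, Or.inl h'.symm, absurd h' hc.2, Or.inr h'.symm]
        · rcases cross2 z z' v1 x2 hz hx2 (Or.inr (Or.inr (Or.inl hv1))) with h' | h' | h' | h'
          exacts [absurd h' hc.1, Or.inl h'.symm, absurd h' hc.2, Or.inr h'.symm]
        · rcases cross2 z z' v1 x3 hz hx3 (Or.inr (Or.inr (Or.inl hv1))) with h' | h' | h' | h'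
          exacts [absurd h' hc.1, Or.inl h'.symm, absurd h' hc.2, Or.inr h'.symm]
      have b2u1 := deg_le_one_of_star star2 hu1v1
      have b2u2 := deg_le_one_of_star star2 hu2v1
      omega
    · -- Case B : degree of v1 at most 2 in both G2 and G3
      have hv2 : G2.degree v1 ≤ 2 := by omega
      have hv3 : G3.degree v1 ≤ 2 := by omega
      by_cases hBI : ∃ x y, G1.Adj x y ∧ x ≠ u1 ∧ x ≠ u2 ∧ y ≠ u1 ∧ y ≠ u2
      · -- Case B-I : an edge of G1 avoiding u1, u2
        obtain ⟨x, y, hxy, hx1, hx2, hy1, hy2⟩ := hBI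
        have p21 : G2.degree u1 ≤ 2 := by
          refine deg_le_two' (x := x) (y := y) fun w hw => ?_
          rcases cross1 x y u1 w hxy (Or.inl hw) with h' | h' | h' | h'
          exacts [absurd h' hx1, Or.inl h'.symm, absurd h' hy1, Or.inr h'.symm]
        have p22 : G2.degree u2 ≤ 2 := by
          refine deg_le_two' (x := x) (y := y) fun w hw => ?_
          rcases cross1 x y u2 w hxy (Or.inl hw) with h' | h' | h' | h'
          exacts [absurd h' hx2, Or.inl h'.symm, absurd h' hy2, Or.inr h'.symm]
        have p31 : G3.degree u1 ≤ 2 := by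
          refine deg_le_two' (x := x) (y := y) fun w hw => ?_
          rcases cross1 x y u1 w hxy (Or.inr hw) with h' | h' | h' | h'
          exacts [absurd h' hx1, Or.inl h'.symm, absurd h' hy1, Or.inr h'.symm]
        have p32 : G3.degree u2 ≤ 2 := by
          refine deg_le_two' (x := x) (y := y) fun w hw => ?_
          rcases cross1 x y u2 w hxy (Or.inr hw) with h' | h' | h' | h'
          exacts [absurd h' hx2, Or.inl h'.symm, absurd h' hy2, Or.inr h'.symm]
        omega
      · by_cases hBII : ∃ y, (G1.Adj u1 y ∨ G1.Adj u2 y) ∧ y ≠ u1 ∧ y ≠ u2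
        · -- Case B-II : an edge of G1 from {u1,u2} going outside {u1,u2}
          obtain ⟨y, hy, hyu1, hyu2⟩ := hBII
          have cross1P : ∀ x y' z w, G1.Adj x y' → G2.Adj z w →
              x = z ∨ x = w ∨ y' = z ∨ y' = w :=
            fun x y' z w h1 h2 => cross1 x y' z w h1 (Or.inl h2)
          have cross1Q : ∀ x y' z w, G1.Adj x y' → G3.Adj z w →
              x = z ∨ x = w ∨ y' = z ∨ y' = w :=
            fun x y' z w h1 h2 => cross1 x y' z w h1 (Or.inr h2)
          rcases hy with h | h
          · have hD := lemBII hdisj hmem haA hbB hb h1A cross1P cross1Q cross2 hA2 hA3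
              hu1 hu2 hu12 h hyu2
            rcases max_choice (4 * a + 2) (3 * a + 2 * b + 1) with hmx | hmx <;> omega
          · have hD := lemBII hdisj hmem haA hbB hb h1A cross1P cross1Q cross2 hA2 hA3
              hu2 hu1 (Ne.symm hu12) h hyu1
            rcases max_choice (4 * a + 2) (3 * a + 2 * b + 1) with hmx | hmx <;> omega
        · -- Case C : every edge of G1 is contained in {u1, u2}
          have main : ∀ p q, G1.Adj p q → p ≠ u1 → p ≠ u2 → False := by
            intro p q h hp1 hp2
            by_cases hq1 : q = u1
            · exact hBII ⟨p, Or.inl (hq1 ▸ h.symm), hp1, hp2⟩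
            · by_cases hq2 : q = u2
              · exact hBII ⟨p, Or.inr (hq2 ▸ h.symm), hp1, hp2⟩
              · exact hBI ⟨p, q, h, hp1, hp2, hq1, hq2⟩
          have d1u1 : G1.degree u1 ≤ 1 := by
            refine deg_le_one' (v := u2) fun w hw => ?_
            by_contra hne
            exact main w u1 hw.symm hw.ne' hne
          have d1u2 : G1.degree u2 ≤ 1 := by
            refine deg_le_one' (v := u1) fun w hw => ?_
            by_contra hne
            exact main w u2 hw.symm hne hw.ne'
          have hE := lemE hdisj hmem haA hbB hb hA2 hA3 cross2 hu1 hu2 hu12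
          rcases max_choice (4 * a) (3 * a + 2 * b - 1) with hmx | hmx <;> omega
end
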